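/- arXiv:2107.08377 — 2 statements merged into one kernel-verified Lean document; each statement's English description precedes it below -/
import Mathlib

section
/- For any real λ with 0 ≤ λ < 1 and any natural number T ≥ 1, the sum ∑_{t=1}^{T} λ^{2(t-1)} √t is at most 1/(1-λ²)². -/
theorem decayed_momentum_sum_bound (lam : ℝ) (hlam0 : 0 ≤ lam) (hlam1 : lam < 1)
    (T : ℕ) (hT : 1 ≤ T) :
    ∑ t ∈ Finset.Icc 1 T, lam ^ (2 * (t - 1)) * Real.sqrt t ≤ 1 / (1 - lam ^ 2) ^ 2 := by
  set r := lam ^ 2 with hr_def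
  have hr0 : 0 ≤ r := sq_nonneg lam
  have hr1 : r < 1 := by nlinarith
  have hsum : HasSum (fun n : ℕ => ((n : ℝ) + 1) * r ^ n) (1 / (1 - r) ^ 2) := by
    have h1 : HasSum (fun n : ℕ => (n : ℝ) * r ^ n) (r / (1 - r) ^ 2) :=
      hasSum_coe_mul_geometric_of_norm_lt_one
        (by rwa [Real.norm_eq_abs, abs_of_nonneg hr0])
    have h2 : HasSum (fun n : ℕ => r ^ n) (1 / (1 - r)) := by
      simpa [one_div] using hasSum_geometric_of_lt_one hr0 hr1
    have hne : (1 - r) ≠ 0 := by linarith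
    have h := h1.add h2
    rw [show r / (1 - r) ^ 2 + 1 / (1 - r) = 1 / (1 - r) ^ 2 by field_simp; ring] at h
    convert h using 1
    funext n
    ring
  calc ∑ t ∈ Finset.Icc 1 T, lam ^ (2 * (t - 1)) * Real.sqrt t
      ≤ ∑ t ∈ Finset.Icc 1 T, (t : ℝ) * r ^ (t - 1) := by
        apply Finset.sum_le_sum
        intro t ht
        simp only [Finset.mem_Icc] at ht
        have h1t : (1 : ℝ) ≤ (t : ℝ) := by exact_mod_cast ht.1
        have hs : Real.sqrt t ≤ t := by
          rw [Real.sqrt_le_left (by linarith)]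
          nlinarith
        calc lam ^ (2 * (t - 1)) * Real.sqrt t = r ^ (t - 1) * Real.sqrt t := by
              rw [hr_def, ← pow_mul]
          _ ≤ r ^ (t - 1) * t := by gcongr
          _ = (t : ℝ) * r ^ (t - 1) := mul_comm _ _
    _ = ∑ i ∈ Finset.range T, ((i : ℝ) + 1) * r ^ i := by
        rw [show Finset.Icc 1 T = Finset.Ico 1 (T + 1) by rfl, Finset.sum_Ico_eq_sum_range]
        simp only [Nat.add_sub_cancel]
        apply Finset.sum_congr rfl
        intro i _
        rw [Nat.add_sub_cancel_left]
        push_cast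
        ring
    _ ≤ 1 / (1 - r) ^ 2 := by
        rw [← hsum.tsum_eq]
        exact Summable.sum_le_tsum _ (fun i _ => by positivity) hsum.summable
end

section
/- Suppose a function f : ℝ^d → ℝ is bounded below and has L-Lipschitz gradient, and suppose m ≤ f(x) + c for some m > 0. Then the gradient of l(x) = √(f(x) + c) satisfies: ∇l is Lipschitz on any set where ‖∇f‖ ≤ G and f + c ≥ m, with Lipschitz constant (L/(2√m) + G²/(4 m^{3/2})). -/
/-!
With `φ s = 1 / (2 * √s)` we have `∇l = φ (f + c) • ∇f`. For `m ≤ A ≤ B`,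
`φ A • a - φ B • b = φ B • (a - b) + (φ A - φ B) • a` and `φ A - φ B ≤ (B - A) / (4 m√m)`.
Since `X` need not be convex, `|f x - f y|` is only controlled through the descent lemma,
`|f x - f y| ≤ (G + L‖x - y‖)‖x - y‖`. The surplus `L‖x - y‖` is absorbed by regrouping
the bound as `φ A · L‖x - y‖ + (φ A - φ B)(G - L‖x - y‖)`: the second term is either
nonpositive or at most `(G² - L²‖x - y‖²)‖x - y‖ / (4 m√m)`.
-/

open Real InnerProductSpace
open scoped Gradient

theorem one_div_two_sqrt_sub_one_div_two_sqrt_le {m A B : ℝ} (hm : 0 < m) (hA : m ≤ A)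
    (hAB : A ≤ B) :
    1 / (2 * √A) - 1 / (2 * √B) ≤ (B - A) / (4 * (m * √m)) := by
  have hsm : 0 < √m := sqrt_pos.mpr hm
  have hmA : √m ≤ √A := sqrt_le_sqrt hA
  have hmB : √m ≤ √B := sqrt_le_sqrt (hA.trans hAB)
  have hsA : 0 < √A := hsm.trans_le hmA
  have hsB : 0 < √B := hsm.trans_le hmB
  have hdiff : 1 / (2 * √A) - 1 / (2 * √B) = (B - A) / (2 * (√A * √B) * (√A + √B)) := by
    rw [div_sub_div _ _ (by positivity) (by positivity), eq_div_iff (by positivity)]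
    field_simp
    linear_combination sq_sqrt (hm.le.trans (hA.trans hAB)) - sq_sqrt (hm.le.trans hA)
  rw [hdiff]
  refine div_le_div_of_nonneg_left (sub_nonneg.mpr hAB) (by positivity) ?_
  have hprod : m ≤ √A * √B := by
    simpa [mul_self_sqrt hm.le] using mul_le_mul hmA hmB hsm.le hsA.le
  nlinarith

section NormedSpace

variable {E : Type*} [SeminormedAddCommGroup E] [NormedSpace ℝ E] {a b : E}
  {A B m g ℓ D : ℝ}

theorem norm_one_div_two_sqrt_smul_sub_le_of_le (hm : 0 < m) (hA : m ≤ A) (hAB : A ≤ B)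
    (ha : ‖a‖ ≤ g) (hab : ‖a - b‖ ≤ ℓ) (hD : 0 ≤ D) (hBA : B - A ≤ (g + ℓ) * D) :
    ‖(1 / (2 * √A)) • a - (1 / (2 * √B)) • b‖ ≤
      ℓ / (2 * √m) + g ^ 2 / (4 * (m * √m)) * D := by
  set s := 1 / (2 * √A)
  set t := 1 / (2 * √B)
  have hsm : 0 < √m := sqrt_pos.mpr hm
  have hsA : 0 < √A := hsm.trans_le (sqrt_le_sqrt hA)
  have hℓ : 0 ≤ ℓ := (norm_nonneg _).trans hab
  have ht : 0 ≤ t := by positivity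
  have hts : t ≤ s := one_div_le_one_div_of_le (by positivity) (by gcongr)
  have hs : s ≤ 1 / (2 * √m) := one_div_le_one_div_of_le (by positivity) (by gcongr)
  have htriangle : ‖s • a - t • b‖ ≤ s * ℓ + (s - t) * (g - ℓ) :=
    calc ‖s • a - t • b‖ = ‖t • (a - b) + (s - t) • a‖ := by congr 1; module
      _ ≤ t * ℓ + (s - t) * g := by
        refine (norm_add_le _ _).trans ?_
        rw [norm_smul, norm_smul, norm_of_nonneg ht, norm_of_nonneg (sub_nonneg.mpr hts)]
        gcongr
      _ = s * ℓ + (s - t) * (g - ℓ) := by ring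
  have hcorrection : (s - t) * (g - ℓ) ≤ g ^ 2 / (4 * (m * √m)) * D := by
    rcases le_or_gt g ℓ with hgℓ | hℓg
    · exact (mul_nonpos_of_nonneg_of_nonpos (sub_nonneg.mpr hts) (sub_nonpos.mpr hgℓ)).trans
        (by positivity)
    · calc (s - t) * (g - ℓ) ≤ (B - A) / (4 * (m * √m)) * (g - ℓ) := by
            gcongr
            exact one_div_two_sqrt_sub_one_div_two_sqrt_le hm hA hAB
        _ ≤ (g + ℓ) * D / (4 * (m * √m)) * (g - ℓ) := by gcongr
        _ = (g ^ 2 - ℓ ^ 2) / (4 * (m * √m)) * D := by ring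
        _ ≤ g ^ 2 / (4 * (m * √m)) * D := by gcongr; nlinarith
  calc ‖s • a - t • b‖ ≤ s * ℓ + (s - t) * (g - ℓ) := htriangle
    _ ≤ 1 / (2 * √m) * ℓ + g ^ 2 / (4 * (m * √m)) * D := by gcongr
    _ = ℓ / (2 * √m) + g ^ 2 / (4 * (m * √m)) * D := by ring

theorem norm_one_div_two_sqrt_smul_sub_le (hm : 0 < m) (hA : m ≤ A) (hB : m ≤ B)
    (ha : ‖a‖ ≤ g) (hb : ‖b‖ ≤ g) (hab : ‖a - b‖ ≤ ℓ) (hD : 0 ≤ D)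
    (hAB : |A - B| ≤ (g + ℓ) * D) :
    ‖(1 / (2 * √A)) • a - (1 / (2 * √B)) • b‖ ≤
      ℓ / (2 * √m) + g ^ 2 / (4 * (m * √m)) * D := by
  rcases le_total A B with hle | hle
  · rw [abs_sub_comm] at hAB
    exact norm_one_div_two_sqrt_smul_sub_le_of_le hm hA hle ha hab hD
      ((le_abs_self _).trans hAB)
  · rw [norm_sub_rev] at hab ⊢
    exact norm_one_div_two_sqrt_smul_sub_le_of_le hm hB hle hb hab hD
      ((le_abs_self _).trans hAB)

end NormedSpace

section InnerProductSpace

variable {F : Type*} [NormedAddCommGroup F] [InnerProductSpace ℝ F] [CompleteSpace F]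
  {f : F → ℝ} {f' x : F} {L : ℝ}

theorem HasGradientAt.sqrt (hf : HasGradientAt f f' x) (hx : f x ≠ 0) :
    HasGradientAt (fun y => √(f y)) ((1 / (2 * √(f x))) • f') x := by
  rw [hasGradientAt_iff_hasFDerivAt, map_smul]
  exact hf.hasFDerivAt.sqrt hx

theorem HasGradientAt.add_const (hf : HasGradientAt f f' x) (c : ℝ) :
    HasGradientAt (fun y => f y + c) f' x :=
  HasFDerivAt.add_const c hf

theorem abs_sub_sub_inner_gradient_le (hf : Differentiable ℝ f)
    (hL : ∀ x y, ‖∇ f x - ∇ f y‖ ≤ L * ‖x - y‖) (p q : F) :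
    |f q - f p - ⟪∇ f p, q - p⟫_ℝ| ≤ L * ‖q - p‖ ^ 2 := by
  rcases eq_or_ne q p with rfl | hqp
  · simp
  have hL0 : 0 ≤ L := nonneg_of_mul_nonneg_left ((norm_nonneg _).trans (hL q p))
    (norm_pos_iff.mpr (sub_ne_zero.mpr hqp))
  have hball : ∀ z ∈ Metric.closedBall p ‖q - p‖,
      ‖fderiv ℝ f z - fderiv ℝ f p‖ ≤ L * ‖q - p‖ := by
    intro z hz
    rw [← toDual_gradient, ← toDual_gradient, ← map_sub, LinearIsometryEquiv.norm_map]
    exact (hL z p).trans (mul_le_mul_of_nonneg_left (mem_closedBall_iff_norm.mp hz) hL0)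
  rw [← norm_eq_abs, inner_gradient_left, sq, ← mul_assoc]
  exact (convex_closedBall p ‖q - p‖).norm_image_sub_le_of_norm_fderiv_le' (fun z _ => hf z)
    hball (Metric.mem_closedBall_self (norm_nonneg _)) (mem_closedBall_iff_norm.mpr le_rfl)

theorem abs_sub_le_of_norm_gradient_le (hf : Differentiable ℝ f)
    (hL : ∀ x y, ‖∇ f x - ∇ f y‖ ≤ L * ‖x - y‖) {G : ℝ} {p q : F}
    (hp : ‖∇ f p‖ ≤ G) (hq : ‖∇ f q‖ ≤ G) :
    |f p - f q| ≤ (G + L * ‖p - q‖) * ‖p - q‖ := by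
  have hstep : ∀ {u v : F}, ‖∇ f u‖ ≤ G → f v - f u ≤ (G + L * ‖v - u‖) * ‖v - u‖ := by
    intro u v hu
    have hinner : ⟪∇ f u, v - u⟫_ℝ ≤ G * ‖v - u‖ :=
      (real_inner_le_norm _ _).trans (mul_le_mul_of_nonneg_right hu (norm_nonneg _))
    have hdescent := (abs_le.mp (abs_sub_sub_inner_gradient_le hf hL u v)).2
    linarith
  have hqp := hstep (v := q) hp
  rw [norm_sub_rev q p] at hqp
  exact abs_sub_le_iff.mpr ⟨hstep hq, hqp⟩

end InnerProductSpace

theorem surrogate_gradient_lipschitz_general {d : ℕ} (f : EuclideanSpace ℝ (Fin d) → ℝ)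
    (X : Set (EuclideanSpace ℝ (Fin d))) (c m G L : ℝ)
    (hm : 0 < m)
    (hdiff : Differentiable ℝ f)
    (hLip : ∀ x y, ‖gradient f x - gradient f y‖ ≤ L * ‖x - y‖)
    (hG : ∀ x ∈ X, ‖gradient f x‖ ≤ G)
    (hlow : ∀ x ∈ X, m ≤ f x + c)
    (l : EuclideanSpace ℝ (Fin d) → ℝ) (hl : l = fun x => Real.sqrt (f x + c)) :
    ∀ x ∈ X, ∀ y ∈ X,
      ‖gradient l x - gradient l y‖ ≤
        (L / (2 * Real.sqrt m) + G ^ 2 / (4 * (m * Real.sqrt m))) * ‖x - y‖ := by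
  intro x hx y hy
  have hgrad : ∀ w ∈ X, ∇ l w = (1 / (2 * √(f w + c))) • ∇ f w := fun w hw =>
    hl ▸ (((hdiff w).hasGradientAt.add_const c).sqrt
      (hm.trans_le (hlow w hw)).ne').gradient
  have hvalues : |(f x + c) - (f y + c)| ≤ (G + L * ‖x - y‖) * ‖x - y‖ := by
    rw [add_sub_add_right_eq_sub]
    exact abs_sub_le_of_norm_gradient_le hdiff hLip (hG x hx) (hG y hy)
  rw [hgrad x hx, hgrad y hy]
  exact (norm_one_div_two_sqrt_smul_sub_le hm (hlow x hx) (hlow y hy) (hG x hx) (hG y hy)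
    (hLip x y) (norm_nonneg _) hvalues).trans_eq (by ring)

theorem surrogate_gradient_lipschitz {d : ℕ} (f : EuclideanSpace ℝ (Fin d) → ℝ)
    (X : Set (EuclideanSpace ℝ (Fin d))) (c m G L : ℝ)
    (hc : 0 < c) (hm : 0 < m)
    (hdiff : Differentiable ℝ f)
    (hbdd : ∃ B, ∀ x, B ≤ f x)
    (hLip : ∀ x y, ‖gradient f x - gradient f y‖ ≤ L * ‖x - y‖)
    (hG : ∀ x ∈ X, ‖gradient f x‖ ≤ G)
    (hlow : ∀ x ∈ X, m ≤ f x + c)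
    (l : EuclideanSpace ℝ (Fin d) → ℝ) (hl : l = fun x => Real.sqrt (f x + c)) :
    ∀ x ∈ X, ∀ y ∈ X,
      ‖gradient l x - gradient l y‖ ≤
        (L / (2 * Real.sqrt m) + G ^ 2 / (4 * (m * Real.sqrt m))) * ‖x - y‖ :=
  surrogate_gradient_lipschitz_general f X c m G L hm hdiff hLip hG hlow l hl
end
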